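/- arXiv:2306.17352 — 3 statements merged into one kernel-verified Lean document; each statement's English description precedes it below -/
import Mathlib

section
/- Suppose [n]! ≠ 0 in k, and set E^{(a)} = E^a/[a]! and F^{(a)} = F^a/[a]! in S(n) for 0 ≤ a ≤ n. Then 1_{−n} = F^{(n)} 1_n E^{(n)} and 1_n = E^{(n)} 1_{−n} F^{(n)}. In particular 1_{−n} belongs to the two-sided ideal S(n) 1_n S(n) and 1_n belongs to the two-sided ideal S(n) 1_{−n} S(n). -/
noncomputable section

open scoped TensorProduct

/-- Balanced quantum integer `[m]` for a natural number `m`. -/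
def qintN {k : Type*} [Field k] (v : k) (m : ℕ) : k :=
  ∑ t ∈ Finset.range m, v ^ ((m : ℤ) - 1 - 2 * t)

/-- Balanced quantum integer `[m]` for an integer `m`. -/
def qint {k : Type*} [Field k] (v : k) (m : ℤ) : k :=
  if 0 ≤ m then qintN v m.toNat else - qintN v (-m).toNat

/-- Quantum factorial `[m]! = [1][2]⋯[m]`. -/
def qfact {k : Type*} [Field k] (v : k) (m : ℕ) : k :=
  ∏ j ∈ Finset.range m, qintN v (j + 1)

/-- `X(n) = {i ∈ ℤ : |i| ≤ n, i ≡ n (mod 2)}`. -/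
def Xset (n : ℕ) : Finset ℤ :=
  (Finset.Icc (-(n : ℤ)) (n : ℤ)).filter (fun i => i % 2 = (n : ℤ) % 2)

/-- Generators of the quantum Schur algebra: `E`, `F`, and the idempotents
`1_i` (the latter indexed by all integers; those outside `X(n)` are set to
zero by the relations). -/
inductive SchurGen : Type
  | E : SchurGen
  | F : SchurGen
  | unit : ℤ → SchurGen

variable (k : Type*) [Field k]

/-- The defining relations of the quantum Schur algebra `S(n)`. -/
inductive SchurRel (v : k) (n : ℕ) :
    FreeAlgebra k SchurGen → FreeAlgebra k SchurGen → Prop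
  | idem : ∀ i ∈ Xset n, ∀ j ∈ Xset n,
      SchurRel v n
        (FreeAlgebra.ι k (SchurGen.unit i) * FreeAlgebra.ι k (SchurGen.unit j))
        (if i = j then FreeAlgebra.ι k (SchurGen.unit i) else 0)
  | sum_one : SchurRel v n (∑ i ∈ Xset n, FreeAlgebra.ι k (SchurGen.unit i)) 1
  | unit_zero : ∀ i ∉ Xset n, SchurRel v n (FreeAlgebra.ι k (SchurGen.unit i)) 0
  | comm : SchurRel v n
      (FreeAlgebra.ι k SchurGen.E * FreeAlgebra.ι k SchurGen.F -
        FreeAlgebra.ι k SchurGen.F * FreeAlgebra.ι k SchurGen.E)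
      (∑ i ∈ Xset n, qint v i • FreeAlgebra.ι k (SchurGen.unit i))
  | Eu (i : ℤ) : SchurRel v n
      (FreeAlgebra.ι k SchurGen.E * FreeAlgebra.ι k (SchurGen.unit i))
      (FreeAlgebra.ι k (SchurGen.unit (i + 2)) * FreeAlgebra.ι k SchurGen.E)
  | Fu (i : ℤ) : SchurRel v n
      (FreeAlgebra.ι k SchurGen.F * FreeAlgebra.ι k (SchurGen.unit i))
      (FreeAlgebra.ι k (SchurGen.unit (i - 2)) * FreeAlgebra.ι k SchurGen.F)
  | uE (i : ℤ) : SchurRel v n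
      (FreeAlgebra.ι k (SchurGen.unit i) * FreeAlgebra.ι k SchurGen.E)
      (FreeAlgebra.ι k SchurGen.E * FreeAlgebra.ι k (SchurGen.unit (i - 2)))
  | uF (i : ℤ) : SchurRel v n
      (FreeAlgebra.ι k (SchurGen.unit i) * FreeAlgebra.ι k SchurGen.F)
      (FreeAlgebra.ι k SchurGen.F * FreeAlgebra.ι k (SchurGen.unit (i + 2)))

/-- The quantum Schur algebra `S(n)`, presented by generators and relations. -/
abbrev SchurAlg (v : k) (n : ℕ) := RingQuot (SchurRel k v n)

/-- The generator `E` of `S(n)`. -/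
def SE (v : k) (n : ℕ) : SchurAlg k v n :=
  RingQuot.mkAlgHom k (SchurRel k v n) (FreeAlgebra.ι k SchurGen.E)

/-- The generator `F` of `S(n)`. -/
def SF (v : k) (n : ℕ) : SchurAlg k v n :=
  RingQuot.mkAlgHom k (SchurRel k v n) (FreeAlgebra.ι k SchurGen.F)

/-- The generator `1_i` of `S(n)`. -/
def Sunit (v : k) (n : ℕ) (i : ℤ) : SchurAlg k v n :=
  RingQuot.mkAlgHom k (SchurRel k v n) (FreeAlgebra.ι k (SchurGen.unit i))

section QAux
variable {k : Type*} [Field k] {v : k}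

lemma qintN_zero : qintN v 0 = 0 := by simp [qintN]

lemma qintN_one : qintN v 1 = 1 := by simp [qintN]

lemma qint_coe (m : ℕ) : qint v (m : ℤ) = qintN v m := by
  simp [qint]

lemma qint_neg (j : ℤ) : qint v (-j) = - qint v j := by
  rcases lt_trichotomy j 0 with h | h | h
  · rw [qint, qint, if_pos (by omega), if_neg (by omega), neg_neg]
  · subst h; simp [qint, qintN_zero]
  · rw [qint, qint, if_neg (by omega), if_pos (by omega), neg_neg]

lemma qrec1 (hv : v ≠ 0) (m : ℕ) : qintN v (m + 1) = v ^ (m : ℤ) + v⁻¹ * qintN v m := by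
  unfold qintN
  rw [Finset.sum_range_succ']
  rw [show (((m + 1 : ℕ) : ℤ)) - 1 - 2 * ((0 : ℕ) : ℤ) = (m : ℤ) by push_cast; ring]
  rw [Finset.sum_congr rfl (fun t _ => by
    rw [show (((m + 1 : ℕ) : ℤ)) - 1 - 2 * (((t + 1 : ℕ)) : ℤ) = ((m : ℤ) - 1 - 2 * t) + (-1) by
      push_cast; ring, zpow_add₀ hv, zpow_neg_one, mul_comm] :
    ∀ t ∈ Finset.range m, v ^ ((((m + 1 : ℕ) : ℤ)) - 1 - 2 * (((t + 1 : ℕ)) : ℤ)) =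
      v⁻¹ * v ^ ((m : ℤ) - 1 - 2 * t)), ← Finset.mul_sum]
  ring

lemma qrec2 (hv : v ≠ 0) (m : ℕ) : qintN v (m + 1) = v ^ (-(m : ℤ)) + v * qintN v m := by
  unfold qintN
  rw [Finset.sum_range_succ]
  rw [show (((m + 1 : ℕ) : ℤ)) - 1 - 2 * ((m : ℕ) : ℤ) = -(m : ℤ) by push_cast; ring]
  rw [Finset.sum_congr rfl (fun t _ => by
    rw [show (((m + 1 : ℕ) : ℤ)) - 1 - 2 * ((t : ℕ) : ℤ) = ((m : ℤ) - 1 - 2 * t) + 1 by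
      push_cast; ring, zpow_add₀ hv, zpow_one, mul_comm] :
    ∀ t ∈ Finset.range m, v ^ ((((m + 1 : ℕ) : ℤ)) - 1 - 2 * ((t : ℕ) : ℤ)) =
      v * v ^ ((m : ℤ) - 1 - 2 * t)), ← Finset.mul_sum]
  ring

lemma qT (hv : v ≠ 0) (m : ℕ) : (v - v⁻¹) * qintN v m = v ^ (m : ℤ) - v ^ (-(m : ℤ)) := by
  induction m with
  | zero => simp [qintN_zero]
  | succ m ih =>
    rw [qrec1 hv, show (((m + 1 : ℕ)) : ℤ) = (m : ℤ) + 1 by push_cast; ring,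
      show -((m : ℤ) + 1) = -(m : ℤ) + (-1) by ring,
      zpow_add₀ hv, zpow_add₀ hv, zpow_one, zpow_neg_one]
    linear_combination v⁻¹ * ih

lemma zpow_negadd (hv : v ≠ 0) (a c : ℕ) :
    v ^ (-((a + c : ℕ) : ℤ)) = v ^ (-(a : ℤ)) * v ^ (-(c : ℤ)) := by
  rw [← zpow_add₀ hv]; congr 1; push_cast; ring

lemma qG (hv : v ≠ 0) (a c : ℕ) :
    v ^ (-(a : ℤ)) * qintN v (a + c) - v ^ (-(a : ℤ)) * v ^ (-(c : ℤ)) * qintN v a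
      = qintN v c := by
  induction c with
  | zero => simp [qintN_zero]
  | succ c ih =>
    have hAB : v ^ (a : ℤ) * v ^ (-(a : ℤ)) = 1 := by
      rw [← zpow_add₀ hv]; simp
    have e4 : v ^ (-((c + 1 : ℕ) : ℤ)) = v ^ (-(c : ℤ)) * v⁻¹ := by
      rw [← zpow_neg_one v, ← zpow_add₀ hv]; congr 1; push_cast; ring
    rw [show a + (c + 1) = (a + c) + 1 by ring, qrec2 hv (a + c), qrec2 hv c,
      zpow_negadd hv a c, e4]
    linear_combination v * ih + (v ^ (-(a : ℤ)) * v ^ (-(c : ℤ))) * qT hv a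
      + v ^ (-(c : ℤ)) * hAB

lemma qkey (hv : v ≠ 0) (a b : ℕ) :
    qintN v (a + 1) * qintN v b
      = qintN v a * qintN v (b + 1) + qint v ((b : ℤ) - (a : ℤ)) := by
  have base : qintN v (a + 1) * qintN v b - qintN v a * qintN v (b + 1)
      = v ^ (-(a : ℤ)) * qintN v b - v ^ (-(b : ℤ)) * qintN v a := by
    rw [qrec2 hv a, qrec1 hv b]
    linear_combination qintN v a * qT hv b
  rcases le_or_gt a b with h | h
  · obtain ⟨c, rfl⟩ : ∃ c, b = a + c := ⟨b - a, by omega⟩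
    have g := qG hv a c
    rw [show ((a + c : ℕ) : ℤ) - (a : ℤ) = ((c : ℕ) : ℤ) by push_cast; ring, qint_coe]
    rw [zpow_negadd hv a c] at base
    linear_combination base + g
  · obtain ⟨c, rfl⟩ : ∃ c, a = b + c := ⟨a - b, by omega⟩
    have g := qG hv b c
    rw [show ((b : ℕ) : ℤ) - ((b + c : ℕ) : ℤ) = -((c : ℕ) : ℤ) by push_cast; ring,
      qint_neg, qint_coe]
    rw [zpow_negadd hv b c] at base
    linear_combination base - g

lemma coeff_step (hv : v ≠ 0) (a n : ℕ) (h : a + 1 ≤ n) :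
    qintN v (a + 1) * qintN v (n - a) + qint v ((n : ℤ) - 2 * (a : ℤ) - 2)
      = qintN v (a + 2) * qintN v (n - (a + 1)) := by
  have hk := qkey hv (a + 1) (n - (a + 1))
  rw [show n - (a + 1) + 1 = n - a by omega] at hk
  rw [show ((n - (a + 1) : ℕ) : ℤ) - ((a + 1 : ℕ) : ℤ) = (n : ℤ) - 2 * (a : ℤ) - 2 by omega] at hk
  rw [show a + 1 + 1 = a + 2 from rfl] at hk
  linear_combination -hk

lemma qfact_eq (n : ℕ) : ∏ j ∈ Finset.range n, qintN v (n - j) = qfact v n := by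
  have h := Finset.prod_range_reflect (fun j => qintN v (j + 1)) n
  unfold qfact
  rw [← h]
  exact Finset.prod_congr rfl fun j hj => by
    rw [Finset.mem_range] at hj; congr 1; omega

end QAux

section SchurAux
variable {k : Type*} [Field k] (v : k) (n : ℕ)

lemma mem_Xset (i : ℤ) :
    i ∈ Xset n ↔ -(n : ℤ) ≤ i ∧ i ≤ (n : ℤ) ∧ i % 2 = (n : ℤ) % 2 := by
  simp [Xset, Finset.mem_filter, Finset.mem_Icc, and_assoc]

lemma sunit_zero {i : ℤ} (h : i ∉ Xset n) : Sunit k v n i = 0 := by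
  have h2 := RingQuot.mkAlgHom_rel k (SchurRel.unit_zero (v := v) i h)
  simpa [Sunit] using h2

lemma sunit_mul (i j : ℤ) :
    Sunit k v n i * Sunit k v n j = if i = j then Sunit k v n i else 0 := by
  by_cases hi : i ∈ Xset n
  · by_cases hj : j ∈ Xset n
    · have h2 := RingQuot.mkAlgHom_rel k (SchurRel.idem (v := v) i hi j hj)
      by_cases h : i = j
      · subst h
        rw [if_pos rfl]
        simpa [Sunit] using h2
      · rw [if_neg h]
        simpa [Sunit, h] using h2
    · rw [sunit_zero v n hj, mul_zero]
      split_ifs with h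
      · subst h; exact (sunit_zero v n hj).symm
      · rfl
  · rw [sunit_zero v n hi, zero_mul]
    split_ifs <;> rfl

lemma scomm : SE k v n * SF k v n - SF k v n * SE k v n
    = ∑ i ∈ Xset n, qint v i • Sunit k v n i := by
  have h2 := RingQuot.mkAlgHom_rel k (SchurRel.comm (v := v) (n := n))
  simpa [SE, SF, Sunit] using h2

lemma sFE : SF k v n * SE k v n
    = SE k v n * SF k v n - ∑ i ∈ Xset n, qint v i • Sunit k v n i := by
  rw [← scomm v n]; abel

lemma sEF : SE k v n * SF k v n
    = SF k v n * SE k v n + ∑ i ∈ Xset n, qint v i • Sunit k v n i := by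
  rw [← scomm v n]; abel

lemma sE_unit (i : ℤ) :
    SE k v n * Sunit k v n i = Sunit k v n (i + 2) * SE k v n := by
  have h2 := RingQuot.mkAlgHom_rel k (SchurRel.Eu (v := v) (n := n) i)
  simpa [SE, Sunit] using h2

lemma sF_unit (i : ℤ) :
    SF k v n * Sunit k v n i = Sunit k v n (i - 2) * SF k v n := by
  have h2 := RingQuot.mkAlgHom_rel k (SchurRel.Fu (v := v) (n := n) i)
  simpa [SF, Sunit] using h2

lemma sE_pow_unit (a : ℕ) (i : ℤ) :
    SE k v n ^ a * Sunit k v n i = Sunit k v n (i + 2 * a) * SE k v n ^ a := by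
  induction a generalizing i with
  | zero => simp
  | succ a ih =>
    rw [pow_succ, mul_assoc, sE_unit, ← mul_assoc, ih (i + 2), mul_assoc, ← pow_succ,
      show i + 2 + 2 * (a : ℤ) = i + 2 * ((a + 1 : ℕ) : ℤ) by push_cast; ring]

lemma sF_pow_unit (a : ℕ) (i : ℤ) :
    SF k v n ^ a * Sunit k v n i = Sunit k v n (i - 2 * a) * SF k v n ^ a := by
  induction a generalizing i with
  | zero => simp
  | succ a ih =>
    rw [pow_succ, mul_assoc, sF_unit, ← mul_assoc, ih (i - 2), mul_assoc, ← pow_succ,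
      show i - 2 - 2 * (a : ℤ) = i - 2 * ((a + 1 : ℕ) : ℤ) by push_cast; ring]

lemma Ssum_mul (w : ℤ) (hw : w ∈ Xset n) (x : SchurAlg k v n)
    (hx : Sunit k v n w * x = x) :
    (∑ i ∈ Xset n, qint v i • Sunit k v n i) * x = qint v w • x := by
  rw [Finset.sum_mul]
  have hterm : ∀ i ∈ Xset n,
      (qint v i • Sunit k v n i) * x = if i = w then qint v w • x else 0 := by
    intro i hi
    have h1 : Sunit k v n i * x = (if i = w then Sunit k v n i else 0) * x := by
      conv_lhs => rw [← hx]
      rw [← mul_assoc, sunit_mul]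
    rw [smul_mul_assoc, h1]
    split_ifs with h
    · subst h; rw [hx]
    · simp
  rw [Finset.sum_congr rfl hterm,
    Finset.sum_ite_eq' (Xset n) w (fun _ => qint v w • x), if_pos hw]

lemma F_mul_unit_neg : SF k v n * Sunit k v n (-(n : ℤ)) = 0 := by
  have h : (-(n : ℤ) - 2) ∉ Xset n := by rw [mem_Xset]; omega
  rw [sF_unit, sunit_zero v n h, zero_mul]

lemma E_mul_unit_pos : SE k v n * Sunit k v n ((n : ℤ)) = 0 := by
  have h : ((n : ℤ) + 2) ∉ Xset n := by rw [mem_Xset]; omega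
  rw [sE_unit, sunit_zero v n h, zero_mul]

lemma unit_neg_idem : Sunit k v n (-(n : ℤ)) * Sunit k v n (-(n : ℤ))
    = Sunit k v n (-(n : ℤ)) := by
  rw [sunit_mul, if_pos rfl]

lemma unit_pos_idem : Sunit k v n ((n : ℤ)) * Sunit k v n ((n : ℤ))
    = Sunit k v n ((n : ℤ)) := by
  rw [sunit_mul, if_pos rfl]

lemma sFE_pow {v : k} (hv : v ≠ 0) (a : ℕ) (h : a + 1 ≤ n) :
    SF k v n * (SE k v n ^ (a + 1) * Sunit k v n (-(n : ℤ))) =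
      (qintN v (a + 1) * qintN v (n - a)) • (SE k v n ^ a * Sunit k v n (-(n : ℤ))) := by
  induction a with
  | zero =>
    rw [pow_one, pow_zero, one_mul, ← mul_assoc, sFE v n, sub_mul, mul_assoc,
      F_mul_unit_neg v n, mul_zero, zero_sub]
    have hw : -(n : ℤ) ∈ Xset n := by rw [mem_Xset]; omega
    rw [Ssum_mul v n (-(n : ℤ)) hw (Sunit k v n (-(n : ℤ))) (unit_neg_idem v n)]
    rw [show (-(n : ℤ)) = -((n : ℕ) : ℤ) from rfl, qint_neg, qint_coe, qintN_one,
      one_mul, Nat.sub_zero]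
    module
  | succ a ih =>
    have h1 : a + 1 ≤ n := by omega
    have hX : SE k v n ^ (a + 1) * Sunit k v n (-(n : ℤ))
        = Sunit k v n (-(n : ℤ) + 2 * ((a + 1 : ℕ) : ℤ)) * SE k v n ^ (a + 1) :=
      sE_pow_unit v n (a + 1) (-(n : ℤ))
    have hw : (-(n : ℤ) + 2 * ((a + 1 : ℕ) : ℤ)) ∈ Xset n := by
      rw [mem_Xset]; push_cast; omega
    have hx : Sunit k v n (-(n : ℤ) + 2 * ((a + 1 : ℕ) : ℤ)) *
        (SE k v n ^ (a + 1) * Sunit k v n (-(n : ℤ)))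
        = SE k v n ^ (a + 1) * Sunit k v n (-(n : ℤ)) := by
      conv_lhs => rw [hX]
      rw [← mul_assoc, sunit_mul, if_pos rfl, ← hX]
    rw [pow_succ' (SE k v n) (a + 1), mul_assoc, ← mul_assoc (SF k v n), sFE v n,
      sub_mul, mul_assoc, ih h1, mul_smul_comm, ← mul_assoc, ← pow_succ',
      Ssum_mul v n _ hw _ hx]
    have hq : qint v (-(n : ℤ) + 2 * ((a + 1 : ℕ) : ℤ))
        = - qint v ((n : ℤ) - 2 * (a : ℤ) - 2) := by
      rw [show -(n : ℤ) + 2 * ((a + 1 : ℕ) : ℤ) = -((n : ℤ) - 2 * (a : ℤ) - 2) by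
        push_cast; ring, qint_neg]
    have hc : qintN v (a + 1) * qintN v (n - a)
        - qint v (-(n : ℤ) + 2 * ((a + 1 : ℕ) : ℤ))
        = qintN v (a + 1 + 1) * qintN v (n - (a + 1)) := by
      rw [hq, sub_neg_eq_add, show a + 1 + 1 = a + 2 from rfl]
      exact coeff_step hv a n h1
    rw [← hc]
    module

lemma sEF_pow {v : k} (hv : v ≠ 0) (a : ℕ) (h : a + 1 ≤ n) :
    SE k v n * (SF k v n ^ (a + 1) * Sunit k v n ((n : ℤ))) =
      (qintN v (a + 1) * qintN v (n - a)) • (SF k v n ^ a * Sunit k v n ((n : ℤ))) := by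
  induction a with
  | zero =>
    rw [pow_one, pow_zero, one_mul, ← mul_assoc, sEF v n, add_mul, mul_assoc,
      E_mul_unit_pos v n, mul_zero, zero_add]
    have hw : (n : ℤ) ∈ Xset n := by rw [mem_Xset]; omega
    rw [Ssum_mul v n ((n : ℤ)) hw (Sunit k v n ((n : ℤ))) (unit_pos_idem v n)]
    rw [qint_coe, qintN_one, one_mul, Nat.sub_zero]
  | succ a ih =>
    have h1 : a + 1 ≤ n := by omega
    have hX : SF k v n ^ (a + 1) * Sunit k v n ((n : ℤ))
        = Sunit k v n ((n : ℤ) - 2 * ((a + 1 : ℕ) : ℤ)) * SF k v n ^ (a + 1) :=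
      sF_pow_unit v n (a + 1) ((n : ℤ))
    have hw : ((n : ℤ) - 2 * ((a + 1 : ℕ) : ℤ)) ∈ Xset n := by
      rw [mem_Xset]; push_cast; omega
    have hx : Sunit k v n ((n : ℤ) - 2 * ((a + 1 : ℕ) : ℤ)) *
        (SF k v n ^ (a + 1) * Sunit k v n ((n : ℤ)))
        = SF k v n ^ (a + 1) * Sunit k v n ((n : ℤ)) := by
      conv_lhs => rw [hX]
      rw [← mul_assoc, sunit_mul, if_pos rfl, ← hX]
    rw [pow_succ' (SF k v n) (a + 1), mul_assoc, ← mul_assoc (SE k v n), sEF v n,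
      add_mul, mul_assoc, ih h1, mul_smul_comm, ← mul_assoc, ← pow_succ',
      Ssum_mul v n _ hw _ hx]
    have hc : qintN v (a + 1) * qintN v (n - a)
        + qint v ((n : ℤ) - 2 * ((a + 1 : ℕ) : ℤ))
        = qintN v (a + 1 + 1) * qintN v (n - (a + 1)) := by
      rw [show (n : ℤ) - 2 * ((a + 1 : ℕ) : ℤ) = (n : ℤ) - 2 * (a : ℤ) - 2 by
        push_cast; ring, show a + 1 + 1 = a + 2 from rfl]
      exact coeff_step hv a n h1
    rw [← hc]
    module

lemma spow_FE {v : k} (hv : v ≠ 0) (a : ℕ) (h : a ≤ n) :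
    SF k v n ^ a * (SE k v n ^ a * Sunit k v n (-(n : ℤ))) =
      (∏ j ∈ Finset.range a, (qintN v (j + 1) * qintN v (n - j))) •
        Sunit k v n (-(n : ℤ)) := by
  induction a with
  | zero => simp
  | succ a ih =>
    have h1 : a ≤ n := by omega
    rw [pow_succ (SF k v n) a, mul_assoc, sFE_pow n hv a h, mul_smul_comm,
      ih h1, smul_smul, Finset.prod_range_succ, mul_comm]

lemma spow_EF {v : k} (hv : v ≠ 0) (a : ℕ) (h : a ≤ n) :
    SE k v n ^ a * (SF k v n ^ a * Sunit k v n ((n : ℤ))) =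
      (∏ j ∈ Finset.range a, (qintN v (j + 1) * qintN v (n - j))) •
        Sunit k v n ((n : ℤ)) := by
  induction a with
  | zero => simp
  | succ a ih =>
    have h1 : a ≤ n := by omega
    rw [pow_succ (SE k v n) a, mul_assoc, sEF_pow n hv a h, mul_smul_comm,
      ih h1, smul_smul, Finset.prod_range_succ, mul_comm]

lemma sprod_eq {v : k} (n : ℕ) :
    (∏ j ∈ Finset.range n, (qintN v (j + 1) * qintN v (n - j)))
      = qfact v n * qfact v n := by
  rw [Finset.prod_mul_distrib, qfact_eq]
  rfl

end SchurAux

/-- `1_{-n} = F^{(n)} 1_n E^{(n)}` and `1_n = E^{(n)} 1_{-n} F^{(n)}`;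
in particular each of `1_{-n}`, `1_n` lies in the two-sided ideal generated by
the other. -/
theorem stmt_2 (k : Type*) [Field k] (v : k) (hv : v ≠ 0) (n : ℕ)
    (hq : qfact v n ≠ 0) :
    Sunit k v n (-(n : ℤ)) =
      ((qfact v n)⁻¹ • SF k v n ^ n) * Sunit k v n (n : ℤ) *
        ((qfact v n)⁻¹ • SE k v n ^ n) ∧
    Sunit k v n (n : ℤ) =
      ((qfact v n)⁻¹ • SE k v n ^ n) * Sunit k v n (-(n : ℤ)) *
        ((qfact v n)⁻¹ • SF k v n ^ n) ∧
    Sunit k v n (-(n : ℤ)) ∈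
      Submodule.span k {z : SchurAlg k v n | ∃ x y, z = x * Sunit k v n (n : ℤ) * y} ∧
    Sunit k v n (n : ℤ) ∈
      Submodule.span k {z : SchurAlg k v n | ∃ x y, z = x * Sunit k v n (-(n : ℤ)) * y} := by
  have hEn : Sunit k v n ((n : ℤ)) * SE k v n ^ n = SE k v n ^ n * Sunit k v n (-(n : ℤ)) := by
    have h := sE_pow_unit v n n (-(n : ℤ))
    rw [show -(n : ℤ) + 2 * ((n : ℕ) : ℤ) = ((n : ℕ) : ℤ) by push_cast; ring] at h
    exact h.symm
  have hFn : SF k v n ^ n * Sunit k v n ((n : ℤ)) = Sunit k v n (-(n : ℤ)) * SF k v n ^ n := by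
    have h := sF_pow_unit v n n ((n : ℤ))
    rw [show ((n : ℕ) : ℤ) - 2 * ((n : ℕ) : ℤ) = -((n : ℕ) : ℤ) by ring] at h
    exact h
  have key1 : (SF k v n ^ n * Sunit k v n ((n : ℤ))) * SE k v n ^ n
      = (qfact v n * qfact v n) • Sunit k v n (-(n : ℤ)) := by
    conv_lhs => rw [← unit_pos_idem v n]
    rw [← mul_assoc (SF k v n ^ n) (Sunit k v n ((n : ℤ))) (Sunit k v n ((n : ℤ))), hFn,
      mul_assoc (Sunit k v n (-(n : ℤ)) * SF k v n ^ n) (Sunit k v n ((n : ℤ))) (SE k v n ^ n),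
      hEn, mul_assoc (Sunit k v n (-(n : ℤ))) (SF k v n ^ n)
        (SE k v n ^ n * Sunit k v n (-(n : ℤ))),
      spow_FE n hv n le_rfl, sprod_eq n, mul_smul_comm, unit_neg_idem v n]
  have key2 : (SE k v n ^ n * Sunit k v n (-(n : ℤ))) * SF k v n ^ n
      = (qfact v n * qfact v n) • Sunit k v n ((n : ℤ)) := by
    conv_lhs => rw [← unit_neg_idem v n]
    rw [← mul_assoc (SE k v n ^ n) (Sunit k v n (-(n : ℤ))) (Sunit k v n (-(n : ℤ))), ← hEn,
      mul_assoc (Sunit k v n ((n : ℤ)) * SE k v n ^ n) (Sunit k v n (-(n : ℤ))) (SF k v n ^ n),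
      ← hFn, mul_assoc (Sunit k v n ((n : ℤ))) (SE k v n ^ n)
        (SF k v n ^ n * Sunit k v n ((n : ℤ))),
      spow_EF n hv n le_rfl, sprod_eq n, mul_smul_comm, unit_pos_idem v n]
  have eq1 : Sunit k v n (-(n : ℤ)) =
      ((qfact v n)⁻¹ • SF k v n ^ n) * Sunit k v n (n : ℤ) *
        ((qfact v n)⁻¹ • SE k v n ^ n) := by
    rw [smul_mul_assoc, smul_mul_assoc, mul_smul_comm, smul_smul, key1, smul_smul,
      show (qfact v n)⁻¹ * (qfact v n)⁻¹ * (qfact v n * qfact v n) = 1 by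
        field_simp, one_smul]
  have eq2 : Sunit k v n ((n : ℤ)) =
      ((qfact v n)⁻¹ • SE k v n ^ n) * Sunit k v n (-(n : ℤ)) *
        ((qfact v n)⁻¹ • SF k v n ^ n) := by
    rw [smul_mul_assoc, smul_mul_assoc, mul_smul_comm, smul_smul, key2, smul_smul,
      show (qfact v n)⁻¹ * (qfact v n)⁻¹ * (qfact v n * qfact v n) = 1 by
        field_simp, one_smul]
  exact ⟨eq1, eq2, Submodule.subset_span ⟨_, _, eq1⟩, Submodule.subset_span ⟨_, _, eq2⟩⟩
end
end

section
/- For all integers r, s ≥ 0 there is a unique k-algebra morphism Δ : S(r+s) → S(r) ⊗_k S(s) such that Δ(E) = E ⊗ 1 + (Σ_{i ∈ X(r)} v^i 1_i) ⊗ E, Δ(F) = F ⊗ (Σ_{i ∈ X(s)} v^{−i} 1_i) + 1 ⊗ F, and Δ(1_i) = Σ_{i' + i'' = i} 1_{i'} ⊗ 1_{i''} for each i ∈ X(r+s), where the last sum is over i' ∈ X(r) and i'' ∈ X(s) with i' + i'' = i. -/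
noncomputable section

open scoped TensorProduct

variable (k : Type*) [Field k]

/-! The images of `E`, `F` and `1_i` satisfy the defining relations of `S(r+s)`. The elements
`Σ_{i'+i''=i} 1_{i'} ⊗ 1_{i''}` again form a complete family of orthogonal idempotents, and weights
add under `⊗`, so `Δ(E)` and `Δ(F)` have weights `2` and `-2`; a weight is checked entrywise, since
`x` has weight `d` iff `1_j x 1_i = 0` whenever `j ≠ i + d`. In `[Δ(E), Δ(F)]` the mixed terms
cancel because `K F = v⁻² F K` for `K = Σ vⁱ 1_i`, and what remains is `Σ [i] 1_i` by the
identity `[a + b] = v⁻ᵇ [a] + vᵃ [b]`. The universal property of the presentation then gives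
existence and uniqueness. -/

section QuantumInteger

variable {K : Type*} [Field K] {v : K}

theorem qintN_succ (hv : v ≠ 0) (m : ℕ) : qintN v (m + 1) = v * qintN v m + v ^ (-(m : ℤ)) := by
  rw [qintN, Finset.sum_range_succ, qintN, Finset.mul_sum]
  congr 1
  · refine Finset.sum_congr rfl fun t _ => ?_
    rw [← zpow_one_add₀ hv]
    push_cast
    ring_nf
  · push_cast
    ring_nf

theorem qintN_succ' (hv : v ≠ 0) (m : ℕ) : qintN v (m + 1) = v⁻¹ * qintN v m + v ^ (m : ℤ) := by
  rw [qintN, Finset.sum_range_succ', qintN, Finset.mul_sum]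
  congr 1
  · refine Finset.sum_congr rfl fun t _ => ?_
    rw [← zpow_neg_one, ← zpow_add₀ hv]
    push_cast
    ring_nf
  · push_cast
    ring_nf

theorem qint_natCast (m : ℕ) : qint v m = qintN v m := by
  simp [qint]

theorem qint_neg_natCast (m : ℕ) : qint v (-(m : ℤ)) = -qintN v m := by
  rw [qint]
  split_ifs with h
  · obtain rfl : m = 0 := by omega
    simp [qintN]
  · simp

theorem qint_add_one (hv : v ≠ 0) (m : ℤ) : qint v (m + 1) = v⁻¹ * qint v m + v ^ m := by
  obtain ⟨n, rfl | rfl⟩ := Int.eq_nat_or_neg m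
  · rw [← Nat.cast_succ, qint_natCast, qint_natCast, qintN_succ' hv]
  · cases n with
    | zero => simp [qint, qintN]
    | succ n =>
      rw [show -((n + 1 : ℕ) : ℤ) + 1 = -(n : ℤ) by push_cast; ring, qint_neg_natCast,
        qint_neg_natCast, qintN_succ hv, Nat.cast_succ, show -((n : ℤ) + 1) = -n - 1 by ring,
        zpow_sub_one₀ hv]
      field_simp
      ring

theorem qint_add (hv : v ≠ 0) (a b : ℤ) :
    qint v (a + b) = v ^ (-b) * qint v a + v ^ a * qint v b := by
  have step : ∀ b : ℤ, qint v (a + (b + 1)) - v ^ (-(b + 1)) * qint v a - v ^ a * qint v (b + 1) =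
      v⁻¹ * (qint v (a + b) - v ^ (-b) * qint v a - v ^ a * qint v b) := by
    intro b
    rw [← add_assoc, qint_add_one hv, qint_add_one hv, neg_add, zpow_add₀ hv, zpow_add₀ hv,
      zpow_neg_one]
    ring
  rw [← sub_eq_zero, ← sub_sub]
  induction b using Int.induction_on with
  | zero => simp [qint, qintN]
  | succ b ih => rw [step, ih, mul_zero]
  | pred b ih =>
    have h := step (-b - 1)
    rw [sub_add_cancel, ih, eq_comm, mul_eq_zero] at h
    exact h.resolve_left (inv_ne_zero hv)

end QuantumInteger

structure IsWeightIdempotents {A : Type*} [Semiring A] (e : ℤ → A) (S : Finset ℤ) : Prop where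
  mul_eq : ∀ i j, e i * e j = if i = j then e i else 0
  sum_eq_one : ∑ i ∈ S, e i = 1
  eq_zero : ∀ i ∉ S, e i = 0

def IsOfWeight {A : Type*} [Semiring A] (e : ℤ → A) (d : ℤ) (x : A) : Prop :=
  ∀ i, x * e i = e (i + d) * x

namespace IsWeightIdempotents

variable {A : Type*} [Semiring A] {e : ℤ → A} {S : Finset ℤ}

theorem ext (he : IsWeightIdempotents e S) {a b : A}
    (h : ∀ i j, e j * a * e i = e j * b * e i) : a = b := by
  have expand : ∀ x : A, x = ∑ j ∈ S, ∑ i ∈ S, e j * x * e i := fun x => by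
    simp_rw [← Finset.mul_sum, ← Finset.sum_mul, he.sum_eq_one, one_mul, mul_one]
  rw [expand a, expand b]
  simp_rw [h]

theorem isOfWeight_iff (he : IsWeightIdempotents e S) {d : ℤ} {x : A} :
    IsOfWeight e d x ↔ ∀ i j, j ≠ i + d → e j * x * e i = 0 := by
  refine ⟨fun hx i j hj => by rw [mul_assoc, hx, ← mul_assoc, he.mul_eq, if_neg hj, zero_mul],
    fun hx i => ?_⟩
  have left : x * e i = e (i + d) * x * e i := by
    conv_lhs => rw [← one_mul (x * e i), ← he.sum_eq_one, Finset.sum_mul]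
    simp_rw [← mul_assoc]
    refine Finset.sum_eq_single (i + d) (fun j _ hj => hx i j hj) fun h => ?_
    rw [he.eq_zero _ h, zero_mul, zero_mul]
  have right : e (i + d) * x = e (i + d) * x * e i := by
    conv_lhs => rw [← mul_one (e (i + d) * x), ← he.sum_eq_one, Finset.mul_sum]
    refine Finset.sum_eq_single i (fun j _ hj => hx j (i + d) (by omega)) fun h => ?_
    rw [he.eq_zero _ h, mul_zero]
  exact left.trans right.symm

variable {R : Type*} [CommSemiring R] [Algebra R A]

theorem mul_sum_smul (he : IsWeightIdempotents e S) (c : ℤ → R) (j : ℤ) :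
    e j * ∑ i ∈ S, c i • e i = c j • e j := by
  simp_rw [Finset.mul_sum, mul_smul_comm, he.mul_eq, smul_ite, smul_zero]
  rw [Finset.sum_ite_eq]
  split_ifs with h
  · rfl
  · rw [he.eq_zero _ h, smul_zero]

theorem sum_smul_mul (he : IsWeightIdempotents e S) (c : ℤ → R) (j : ℤ) :
    (∑ i ∈ S, c i • e i) * e j = c j • e j := by
  simp_rw [Finset.sum_mul, smul_mul_assoc, he.mul_eq, smul_ite, smul_zero]
  rw [Finset.sum_ite_eq']
  split_ifs with h
  · rfl
  · rw [he.eq_zero _ h, smul_zero]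

theorem isOfWeight_sum_smul (he : IsWeightIdempotents e S) (c : ℤ → R) :
    IsOfWeight e 0 (∑ i ∈ S, c i • e i) := fun i => by
  rw [add_zero, he.mul_sum_smul, he.sum_smul_mul]

theorem sum_smul_mul_of_isOfWeight (he : IsWeightIdempotents e S) {d : ℤ} {x : A}
    (hx : IsOfWeight e d x) {c : ℤ → R} {a : R} (hc : ∀ i, c (i + d) = a * c i) :
    (∑ i ∈ S, c i • e i) * x = a • (x * ∑ i ∈ S, c i • e i) := by
  refine he.ext fun i j => ?_
  have lhs : e j * ((∑ i ∈ S, c i • e i) * x) * e i = c j • (e j * x * e i) := by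
    rw [← mul_assoc, he.mul_sum_smul, smul_mul_assoc, smul_mul_assoc]
  have rhs : e j * (a • (x * ∑ i ∈ S, c i • e i)) * e i = (a * c i) • (e j * x * e i) := by
    rw [mul_smul_comm, smul_mul_assoc, ← mul_assoc, mul_assoc, he.sum_smul_mul, mul_smul_comm,
      smul_smul]
  rw [lhs, rhs]
  by_cases hj : j = i + d
  · rw [hj, hc]
  · rw [he.isOfWeight_iff.mp hx i j hj, smul_zero, smul_zero]

end IsWeightIdempotents

theorem isOfWeight_one {A : Type*} [Semiring A] (e : ℤ → A) : IsOfWeight e 0 1 := fun i => by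
  rw [add_zero, one_mul, mul_one]

theorem IsOfWeight.add {A : Type*} [Semiring A] {e : ℤ → A} {d : ℤ} {x y : A}
    (hx : IsOfWeight e d x) (hy : IsOfWeight e d y) : IsOfWeight e d (x + y) := fun i => by
  rw [add_mul, mul_add, hx, hy]

section Tensor

variable (R : Type*) {A B : Type*} [CommSemiring R] [Semiring A] [Algebra R A] [Semiring B]
  [Algebra R B]

def tensorIdempotents (e : ℤ → A) (S : Finset ℤ) (f : ℤ → B) (T : Finset ℤ) (i : ℤ) :
    A ⊗[R] B :=
  ∑ p ∈ (S ×ˢ T).filter (fun p => p.1 + p.2 = i), e p.1 ⊗ₜ[R] f p.2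

variable {R} {e : ℤ → A} {S : Finset ℤ} {f : ℤ → B} {T U : Finset ℤ}

theorem sum_smul_tensorIdempotents (hU : ∀ a ∈ S, ∀ b ∈ T, a + b ∈ U) (c : ℤ → R) :
    ∑ i ∈ U, c i • tensorIdempotents R e S f T i =
      ∑ a ∈ S, ∑ b ∈ T, c (a + b) • (e a ⊗ₜ[R] f b) := by
  have hmaps : ∀ p ∈ S ×ˢ T, p.1 + p.2 ∈ U := fun p hp =>
    hU _ (Finset.mem_product.mp hp).1 _ (Finset.mem_product.mp hp).2
  simp_rw [tensorIdempotents, Finset.smul_sum]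
  rw [← Finset.sum_product' (f := fun a b => c (a + b) • (e a ⊗ₜ[R] f b)),
    ← Finset.sum_fiberwise_of_maps_to hmaps]
  refine Finset.sum_congr rfl fun i _ => Finset.sum_congr rfl fun p hp => ?_
  rw [(Finset.mem_filter.mp hp).2]

theorem sum_smul_tmul_sum_smul (c c' : ℤ → R) :
    (∑ a ∈ S, c a • e a) ⊗ₜ[R] (∑ b ∈ T, c' b • f b) =
      ∑ a ∈ S, ∑ b ∈ T, (c a * c' b) • (e a ⊗ₜ[R] f b) := by
  simp_rw [TensorProduct.sum_tmul, TensorProduct.tmul_sum, TensorProduct.smul_tmul_smul]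

theorem IsWeightIdempotents.tensor (he : IsWeightIdempotents e S) (hf : IsWeightIdempotents f T)
    (hU : ∀ a ∈ S, ∀ b ∈ T, a + b ∈ U) :
    IsWeightIdempotents (tensorIdempotents R e S f T) U where
  mul_eq i j := by
    have term : ∀ p q : ℤ × ℤ, (e p.1 ⊗ₜ[R] f p.2) * (e q.1 ⊗ₜ[R] f q.2) =
        if p = q then e p.1 ⊗ₜ[R] f p.2 else 0 := fun p q => by
      rw [Algebra.TensorProduct.tmul_mul_tmul, he.mul_eq, hf.mul_eq]
      by_cases h1 : p.1 = q.1 <;> by_cases h2 : p.2 = q.2 <;> simp [h1, h2, Prod.ext_iff]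
    simp only [tensorIdempotents, Finset.sum_mul_sum, term, Finset.sum_ite_eq]
    split_ifs with hij
    · subst hij
      exact Finset.sum_congr rfl fun p hp => if_pos hp
    · refine Finset.sum_eq_zero fun p hp => if_neg fun hp' => hij ?_
      rw [← (Finset.mem_filter.mp hp).2, (Finset.mem_filter.mp hp').2]
  sum_eq_one := by
    simpa [he.sum_eq_one, hf.sum_eq_one, ← TensorProduct.tmul_sum, ← TensorProduct.sum_tmul,
      ← Algebra.TensorProduct.one_def] using
      sum_smul_tensorIdempotents (R := R) (e := e) (f := f) hU (fun _ => 1)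
  eq_zero i hi := Finset.sum_eq_zero fun p hp => by
    obtain ⟨hpST, rfl⟩ := Finset.mem_filter.mp hp
    exact absurd (hU _ (Finset.mem_product.mp hpST).1 _ (Finset.mem_product.mp hpST).2) hi

open scoped Pointwise in
theorem IsOfWeight.tmul (he : IsWeightIdempotents e S) (hf : IsWeightIdempotents f T)
    {d d' : ℤ} {x : A} {y : B} (hx : IsOfWeight e d x) (hy : IsOfWeight f d' y) :
    IsOfWeight (tensorIdempotents R e S f T) (d + d') (x ⊗ₜ[R] y) := by
  refine ((he.tensor hf fun a ha b hb => Finset.add_mem_add ha hb).isOfWeight_iff).mpr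
    fun i j hij => ?_
  simp only [tensorIdempotents, Finset.sum_mul, Finset.mul_sum]
  refine Finset.sum_eq_zero fun p hp => Finset.sum_eq_zero fun q hq => ?_
  rw [Algebra.TensorProduct.tmul_mul_tmul, Algebra.TensorProduct.tmul_mul_tmul]
  by_cases h1 : q.1 = p.1 + d
  · have h2 : q.2 ≠ p.2 + d' := by
      have := (Finset.mem_filter.mp hp).2
      have := (Finset.mem_filter.mp hq).2
      omega
    rw [hf.isOfWeight_iff.mp hy _ _ h2, TensorProduct.tmul_zero]
  · rw [he.isOfWeight_iff.mp hx _ _ h1, TensorProduct.zero_tmul]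

end Tensor

theorem add_mem_Xset_add {r s : ℕ} {a b : ℤ} (ha : a ∈ Xset r) (hb : b ∈ Xset s) :
    a + b ∈ Xset (r + s) := by
  simp only [Xset, Finset.mem_filter, Finset.mem_Icc] at ha hb ⊢
  omega

structure SatisfiesSchurRelations {K A : Type*} [Field K] [Ring A] [Algebra K A] (v : K) (n : ℕ)
    (u : ℤ → A) (E F : A) : Prop where
  isWeightIdempotents : IsWeightIdempotents u (Xset n)
  isOfWeight_E : IsOfWeight u 2 E
  isOfWeight_F : IsOfWeight u (-2) F
  commutator : E * F - F * E = ∑ i ∈ Xset n, qint v i • u i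

theorem SatisfiesSchurRelations.tensor {K A B : Type*} [Field K] [Ring A] [Algebra K A] [Ring B]
    [Algebra K B] {v : K} (hv : v ≠ 0) {r s : ℕ} {u : ℤ → A} {E F : A} {u' : ℤ → B} {E' F' : B}
    (h : SatisfiesSchurRelations v r u E F) (h' : SatisfiesSchurRelations v s u' E' F') :
    SatisfiesSchurRelations v (r + s) (tensorIdempotents K u (Xset r) u' (Xset s))
      (E ⊗ₜ[K] 1 + (∑ i ∈ Xset r, v ^ i • u i) ⊗ₜ[K] E')
      (F ⊗ₜ[K] (∑ i ∈ Xset s, v ^ (-i) • u' i) + 1 ⊗ₜ[K] F') := by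
  have hu := h.isWeightIdempotents
  have hu' := h'.isWeightIdempotents
  set Kr := ∑ i ∈ Xset r, v ^ i • u i
  set Ks := ∑ i ∈ Xset s, v ^ (-i) • u' i
  refine ⟨hu.tensor hu' fun _ ha _ hb => add_mem_Xset_add ha hb, ?_, ?_, ?_⟩
  · have h1 := h.isOfWeight_E.tmul (R := K) hu hu' (isOfWeight_one u')
    have h2 := (hu.isOfWeight_sum_smul (fun i => v ^ i)).tmul (R := K) hu hu' h'.isOfWeight_E
    rw [add_zero] at h1
    rw [zero_add] at h2
    exact h1.add h2
  · have h1 := h.isOfWeight_F.tmul (R := K) hu hu' (hu'.isOfWeight_sum_smul (fun i => v ^ (-i)))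
    have h2 := (isOfWeight_one u).tmul (R := K) hu hu' h'.isOfWeight_F
    rw [add_zero] at h1
    rw [zero_add] at h2
    exact h1.add h2
  · have hKF : Kr * F = v ^ (-2 : ℤ) • (F * Kr) :=
      hu.sum_smul_mul_of_isOfWeight h.isOfWeight_F fun i => by
        rw [zpow_add₀ hv, mul_comm]
    have hKE : Ks * E' = v ^ (-2 : ℤ) • (E' * Ks) :=
      hu'.sum_smul_mul_of_isOfWeight h'.isOfWeight_E fun i => by
        rw [neg_add, zpow_add₀ hv, mul_comm]
    have expand : (E ⊗ₜ[K] 1 + Kr ⊗ₜ[K] E') * (F ⊗ₜ[K] Ks + 1 ⊗ₜ[K] F') -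
        (F ⊗ₜ[K] Ks + 1 ⊗ₜ[K] F') * (E ⊗ₜ[K] 1 + Kr ⊗ₜ[K] E') =
        (E * F - F * E) ⊗ₜ[K] Ks + Kr ⊗ₜ[K] (E' * F' - F' * E') := by
      simp only [mul_add, add_mul, Algebra.TensorProduct.tmul_mul_tmul, one_mul, mul_one, hKF, hKE,
        TensorProduct.smul_tmul, TensorProduct.sub_tmul, TensorProduct.tmul_sub]
      abel
    rw [expand, h.commutator, h'.commutator, sum_smul_tmul_sum_smul, sum_smul_tmul_sum_smul,
      sum_smul_tensorIdempotents fun _ ha _ hb => add_mem_Xset_add ha hb, ← Finset.sum_add_distrib]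
    refine Finset.sum_congr rfl fun a _ => ?_
    rw [← Finset.sum_add_distrib]
    refine Finset.sum_congr rfl fun b _ => ?_
    rw [← add_smul, qint_add hv, mul_comm (qint v a), mul_comm (v ^ a)]

namespace SchurAlg

theorem satisfiesSchurRelations (v : k) (n : ℕ) :
    SatisfiesSchurRelations v n (Sunit k v n) (SE k v n) (SF k v n) := by
  have rel {x y} (h : SchurRel k v n x y) := RingQuot.mkAlgHom_rel k h
  have eq_zero (i : ℤ) (hi : i ∉ Xset n) : Sunit k v n i = 0 := by
    simpa [Sunit] using rel (SchurRel.unit_zero i hi)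
  refine ⟨⟨fun i j => ?_, by simpa [Sunit] using rel SchurRel.sum_one, eq_zero⟩, fun i => ?_,
    fun i => ?_, by simpa [Sunit, SE, SF] using rel SchurRel.comm⟩
  · by_cases hi : i ∈ Xset n
    · by_cases hj : j ∈ Xset n
      · simpa [Sunit, apply_ite] using rel (SchurRel.idem i hi j hj)
      · rw [eq_zero j hj, mul_zero, if_neg (ne_of_mem_of_not_mem hi hj)]
    · rw [eq_zero i hi, zero_mul, ite_self]
  · simpa [Sunit, SE] using rel (SchurRel.Eu i)
  · simpa [Sunit, SF, ← sub_eq_add_neg] using rel (SchurRel.Fu i)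

theorem existsUnique_algHom {A : Type*} [Ring A] [Algebra k A] {v : k} {n : ℕ} {u : ℤ → A}
    {E F : A} (h : SatisfiesSchurRelations v n u E F) :
    ∃! φ : SchurAlg k v n →ₐ[k] A,
      φ (SE k v n) = E ∧ φ (SF k v n) = F ∧ ∀ i ∈ Xset n, φ (Sunit k v n i) = u i := by
  let g : SchurGen → A
    | .E => E
    | .F => F
    | .unit i => u i
  have hrel : ∀ ⦃x y⦄, SchurRel k v n x y → FreeAlgebra.lift k g x = FreeAlgebra.lift k g y := by
    intro x y hxy
    cases hxy with
    | idem i _ j _ => simpa [g, apply_ite] using h.isWeightIdempotents.mul_eq i j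
    | sum_one => simpa [g] using h.isWeightIdempotents.sum_eq_one
    | unit_zero i hi => simpa [g] using h.isWeightIdempotents.eq_zero i hi
    | comm => simpa [g] using h.commutator
    | Eu i => simpa [g] using h.isOfWeight_E i
    | Fu i => simpa [g, ← sub_eq_add_neg] using h.isOfWeight_F i
    | uE i => simpa [g] using (h.isOfWeight_E (i - 2)).symm
    | uF i => simpa [g] using (h.isOfWeight_F (i + 2)).symm
  refine ⟨RingQuot.liftAlgHom k ⟨FreeAlgebra.lift k g, hrel⟩, ⟨?_, ?_, fun i _ => ?_⟩, ?_⟩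
  · simp [SE, g]
  · simp [SF, g]
  · simp [Sunit, g]
  rintro φ ⟨hφE, hφF, hφu⟩
  refine RingQuot.ringQuot_ext' k _ _ (FreeAlgebra.hom_ext (funext fun x => ?_))
  cases x with
  | E => simpa [SE, g] using hφE
  | F => simpa [SF, g] using hφF
  | unit i =>
    by_cases hi : i ∈ Xset n
    · simpa [Sunit, g] using hφu i hi
    · have h0 := (satisfiesSchurRelations k v n).isWeightIdempotents.eq_zero i hi
      simp only [Sunit] at h0
      simp [g, h0]

end SchurAlg

/-- existence and uniqueness of the comultiplication-type algebra map
`Δ : S(r+s) → S(r) ⊗ S(s)`. -/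
theorem stmt_6 (k : Type*) [Field k] (v : k) (hv : v ≠ 0) (r s : ℕ) :
    ∃! Δ : SchurAlg k v (r + s) →ₐ[k] (SchurAlg k v r ⊗[k] SchurAlg k v s),
      Δ (SE k v (r + s)) =
        SE k v r ⊗ₜ[k] 1 + (∑ i ∈ Xset r, v ^ i • Sunit k v r i) ⊗ₜ[k] SE k v s ∧
      Δ (SF k v (r + s)) =
        SF k v r ⊗ₜ[k] (∑ i ∈ Xset s, v ^ (-i) • Sunit k v s i) + 1 ⊗ₜ[k] SF k v s ∧
      ∀ i ∈ Xset (r + s),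
        Δ (Sunit k v (r + s) i) =
          ∑ p ∈ (Xset r ×ˢ Xset s).filter (fun p => p.1 + p.2 = i),
            Sunit k v r p.1 ⊗ₜ[k] Sunit k v s p.2 :=
  SchurAlg.existsUnique_algHom k
    ((SchurAlg.satisfiesSchurRelations k v r).tensor hv (SchurAlg.satisfiesSchurRelations k v s))
end
end

section
/- Each operator ė_i (1 ≤ i ≤ n−1) on V^{⊗n} commutes with each of the operators E, F, and K: ė_i ∘ E = E ∘ ė_i, ė_i ∘ F = F ∘ ė_i, and ė_i ∘ K = K ∘ ė_i. -/
noncomputable section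
attribute [local instance] Classical.propDecidable

/-- The `n`-th tensor power of `V = k²`, realized as coordinate functions with
respect to the basis `y_i`, `i ∈ {1,-1}ⁿ` (here `true ↔ 1`, `false ↔ -1`). -/
abbrev Tn (k : Type*) [Field k] (n : ℕ) := (Fin n → Bool) → k

/-- The sign of an index entry: `true ↦ 1`, `false ↦ -1`. -/
def sgn (b : Bool) : ℤ := if b then 1 else -1

/-- The weight `i₁ + ⋯ + i_n` of a basis index. -/
def wt {n : ℕ} (i : Fin n → Bool) : ℤ := ∑ t, sgn (i t)

variable {k : Type*} [Field k]

/-- The operator `E` on `V^{⊗n}`. -/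
def Eop (v : k) (n : ℕ) : Tn k n →ₗ[k] Tn k n where
  toFun f := fun i =>
    ∑ j ∈ Finset.univ.filter (fun j => i j = true),
      v ^ (∑ t ∈ Finset.univ.filter (fun t => t < j), sgn (i t)) * f (Function.update i j false)
  map_add' f g := by
    funext i
    simp [Pi.add_apply, mul_add, Finset.sum_add_distrib]
  map_smul' c f := by
    funext i
    simp only [Pi.smul_apply, smul_eq_mul, RingHom.id_apply]
    rw [Finset.mul_sum]
    exact Finset.sum_congr rfl fun j _ => by ring

/-- The operator `F` on `V^{⊗n}`. -/
def Fop (v : k) (n : ℕ) : Tn k n →ₗ[k] Tn k n where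
  toFun f := fun i =>
    ∑ j ∈ Finset.univ.filter (fun j => i j = false),
      v ^ (-(∑ t ∈ Finset.univ.filter (fun t => j < t), sgn (i t))) * f (Function.update i j true)
  map_add' f g := by
    funext i
    simp [Pi.add_apply, mul_add, Finset.sum_add_distrib]
  map_smul' c f := by
    funext i
    simp only [Pi.smul_apply, smul_eq_mul, RingHom.id_apply]
    rw [Finset.mul_sum]
    exact Finset.sum_congr rfl fun j _ => by ring

/-- The operator `K` on `V^{⊗n}`. -/
def Kop (v : k) (n : ℕ) : Tn k n →ₗ[k] Tn k n where
  toFun f := fun i => v ^ (wt i) * f i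
  map_add' f g := by
    funext i
    simp [Pi.add_apply, mul_add]
  map_smul' c f := by
    funext i
    simp only [Pi.smul_apply, smul_eq_mul, RingHom.id_apply]
    ring

/-- The symmetric bilinear form on `V^{⊗n}` making the `y_i` orthonormal. -/
def form {n : ℕ} (f g : Tn k n) : k := ∑ i, f i * g i

/-- Tensoring on the right with the basis vector `y₁` (if `b = true`) or `y₋₁`
(if `b = false`). -/
def tensY {n : ℕ} (b : Bool) (f : Tn k n) : Tn k (n + 1) :=
  fun i => if i (Fin.last n) = b then f (fun t => i t.castSucc) else 0

/-- `Φ₁(b) = b ⊗ y₁`. -/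
def Phi1 {n : ℕ} (f : Tn k n) : Tn k (n + 1) := tensY true f

/-- `Φ₂(b) = [w] b ⊗ y₋₁ − v^w (F b) ⊗ y₁`, where `w` is the weight of `b`. -/
def Phi2 (v : k) {n : ℕ} (w : ℤ) (f : Tn k n) : Tn k (n + 1) :=
  qint v w • tensY false f - v ^ w • tensY true (Fop v n f)

/-- A `1`-factor: all partial sums are nonnegative. -/
def IsOneFactor {n : ℕ} (α : Fin n → Bool) : Prop :=
  ∀ j : Fin n, 0 ≤ ∑ t ∈ Finset.univ.filter (fun t => t ≤ j), sgn (α t)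

/-- The orthogonal maximal vectors `Ω(α)`, defined recursively. -/
def Omega (v : k) : (n : ℕ) → (Fin n → Bool) → Tn k n
  | 0, _ => fun _ => 1
  | n + 1, α =>
      if α (Fin.last n) = true then Phi1 (Omega v n fun t => α t.castSucc)
      else Phi2 v (wt fun t => α t.castSucc) (Omega v n fun t => α t.castSucc)

/-- Exchanging the entries of an index at two positions. -/
def swapPair {n : ℕ} (a b : Fin n) (i : Fin n → Bool) : Fin n → Bool :=
  fun t => if t = a then i b else if t = b then i a else i t

/-- The Temperley--Lieb operator `ė` acting on tensor positions `a` and `b`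
(intended: `b = a + 1`). -/
def eop (v : k) {n : ℕ} (a b : Fin n) : Tn k n →ₗ[k] Tn k n where
  toFun f := fun i =>
    if i a = true ∧ i b = false then -v⁻¹ * f i + f (swapPair a b i)
    else if i a = false ∧ i b = true then f (swapPair a b i) - v * f i
    else 0
  map_add' f g := by
    funext i
    simp only [Pi.add_apply]
    split_ifs <;> ring
  map_smul' c f := by
    funext i
    simp only [Pi.smul_apply, smul_eq_mul, RingHom.id_apply]
    split_ifs <;> ring

/-- The partial sum `α₁ + ⋯ + α_{q-1}` of the entries before position `q`. -/
def prefSum {n : ℕ} (α : Fin n → Bool) (q : Fin n) : ℤ :=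
  ∑ t ∈ Finset.univ.filter (fun t => t < q), sgn (α t)

/-- `(i, j)` is a pair of `α`: `α_i = 1` and `j` is the least index `> i` with
`α_i + ⋯ + α_j = 0`. -/
def PairedAt {n : ℕ} (α : Fin n → Bool) (i j : Fin n) : Prop :=
  α i = true ∧ i < j ∧ (∑ t ∈ Finset.Icc i j, sgn (α t)) = 0 ∧
    ∀ j' : Fin n, i < j' → j' < j → (∑ t ∈ Finset.Icc i j', sgn (α t)) ≠ 0

/-- An index is a defect if it belongs to no pair. -/
def IsDefect {n : ℕ} (α : Fin n → Bool) (i : Fin n) : Prop :=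
  (∀ j, ¬ PairedAt α i j) ∧ (∀ j, ¬ PairedAt α j i)

/-- `γ ∈ S(α)`: `γ` is obtained from `α` by negating both entries of each pair
in some subset of the pairs of `α`. -/
def InS {n : ℕ} (α γ : Fin n → Bool) : Prop :=
  (∀ i, IsDefect α i → γ i = α i) ∧
  (∀ i j, PairedAt α i j → (γ i = α i ∧ γ j = α j) ∨ (γ i = !α i ∧ γ j = !α j))

/-- `σ(α, γ)`: the number of pairs of `α` negated to obtain `γ`. -/
def sigmaCount {n : ℕ} (α γ : Fin n → Bool) : ℕ :=
  Nat.card {p : Fin n × Fin n // PairedAt α p.1 p.2 ∧ γ p.1 ≠ α p.1}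

/-- The natural (cellular) vectors `N(α) = Σ_{γ ∈ S(α)} (−v)^{σ(α,γ)} y_γ`,
written in coordinates. -/
def Nvec (v : k) (n : ℕ) (α : Fin n → Bool) : Tn k n :=
  fun γ => if InS α γ then (-v) ^ (sigmaCount α γ) else 0

/-- `β^{(j)}` (0-indexed `j`): change the entry of `β` at the position of its
`(j+1)`-st defect (0-indexed: defect number `j`) to `−1`. -/
def linkDefect {m : ℕ} (β : Fin m → Bool) (j : ℕ) : Fin m → Bool :=
  match (Finset.sort (Finset.univ.filter (fun i => IsDefect β i)) (· ≤ ·))[j]? with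
  | some q => Function.update β q false
  | none => β

/-!
Write `E = ∑ⱼ Eⱼ`, where `Eⱼ` raises the `j`th tensor factor and rescales by `v` to the power of
the weight of the earlier factors, and similarly `F = ∑ⱼ Fⱼ`; the operators `Eⱼ`, `Fⱼ` and `K`
each send a basis vector to a multiple of a basis vector. The operator `ė` only mixes `y_i` with
the index obtained by swapping the entries at `a, a+1`, which changes neither the total weight nor
any partial sum ending outside `{a, a+1}`; hence `ė` commutes with `K` and with `Eⱼ`, `Fⱼ` for
`j ∉ {a, a+1}`. On the factors at `a, a+1`, `ė` has rank one with image spanned by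
`y₁ ⊗ y₋₁ − v y₋₁ ⊗ y₁`, which `E_a + E_{a+1}` annihilates, while `ė` kills the image of
`E_a + E_{a+1}`: both composites vanish, and likewise for `F`.
-/

lemma commute_sum_of_pair {ι R : Type*} [Fintype ι] [DecidableEq ι] [NonUnitalNonAssocSemiring R]
    {e : R} {T : ι → R} {a b : ι} (hab : a ≠ b)
    (hoff : ∀ j, j ≠ a → j ≠ b → Commute e (T j))
    (hleft : e * (T a + T b) = 0) (hright : (T a + T b) * e = 0) :
    Commute e (∑ j, T j) := by
  rw [← Finset.sum_add_sum_compl {a, b}, Finset.sum_pair hab]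
  have hpair : Commute e (T a + T b) := hleft.trans hright.symm
  refine hpair.add_right (Commute.sum_right _ _ _ fun j hj => ?_)
  simp only [Finset.mem_compl, Finset.mem_insert, Finset.mem_singleton, not_or] at hj
  exact hoff j hj.1 hj.2

variable {n : ℕ}

def weightedSubst (g : (Fin n → Bool) → k) (σ : (Fin n → Bool) → Fin n → Bool) :
    Module.End k (Tn k n) :=
  LinearMap.mulLeft k g ∘ₗ LinearMap.funLeft k k σ

@[simp]
lemma weightedSubst_apply (g : (Fin n → Bool) → k) (σ : (Fin n → Bool) → Fin n → Bool)
    (f : Tn k n) (i : Fin n → Bool) : weightedSubst g σ f i = g i * f (σ i) :=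
  rfl

def sufSum (α : Fin n → Bool) (q : Fin n) : ℤ :=
  ∑ t ∈ Finset.univ.filter (fun t => q < t), sgn (α t)

def Esite (v : k) (j : Fin n) : Module.End k (Tn k n) :=
  weightedSubst (fun i => if i j = true then v ^ prefSum i j else 0) (Function.update · j false)

def Fsite (v : k) (j : Fin n) : Module.End k (Tn k n) :=
  weightedSubst (fun i => if i j = false then v ^ (-sufSum i j) else 0) (Function.update · j true)

lemma Eop_eq_sum_Esite (v : k) : Eop v n = ∑ j, Esite v j := by
  ext f i
  simp [Eop, Esite, prefSum, Finset.sum_filter, ite_mul]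

lemma Fop_eq_sum_Fsite (v : k) : Fop v n = ∑ j, Fsite v j := by
  ext f i
  simp [Fop, Fsite, sufSum, Finset.sum_filter, ite_mul]

lemma Kop_eq_weightedSubst (v : k) : Kop v n = weightedSubst (fun i => v ^ wt i) id :=
  rfl

section SwapPair

variable {a b : Fin n}

lemma swapPair_update_of_ne {j : Fin n} (hja : j ≠ a) (hjb : j ≠ b) (i : Fin n → Bool)
    (c : Bool) :
    swapPair a b (Function.update i j c) = Function.update (swapPair a b i) j c := by
  funext t
  simp only [swapPair, Function.update_apply]
  split_ifs <;> simp_all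

lemma sum_sgn_swapPair (i : Fin n → Bool) {s : Finset (Fin n)} (hs : a ∈ s ↔ b ∈ s) :
    ∑ t ∈ s, sgn (swapPair a b i t) = ∑ t ∈ s, sgn (i t) := by
  refine Finset.sum_equiv (Equiv.swap a b) (fun t => ?_) fun t _ => ?_
  · rcases eq_or_ne t a with rfl | hta
    · simpa using hs
    rcases eq_or_ne t b with rfl | htb
    · simpa using hs.symm
    · simp [Equiv.swap_apply_of_ne_of_ne hta htb]
  · simp only [swapPair, Equiv.swap_apply_def]
    split_ifs <;> simp_all

lemma wt_swapPair (i : Fin n → Bool) : wt (swapPair a b i) = wt i :=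
  sum_sgn_swapPair i (by simp)

lemma swapPair_apply_of_ne {j : Fin n} (hja : j ≠ a) (hjb : j ≠ b) (i : Fin n → Bool) :
    swapPair a b i j = i j := by
  simp [swapPair, hja, hjb]

lemma prefSum_swapPair (hab : (a : ℕ) + 1 = b) {j : Fin n} (hjb : j ≠ b) (i : Fin n → Bool) :
    prefSum (swapPair a b i) j = prefSum i j := by
  refine sum_sgn_swapPair i ?_
  have : (j : ℕ) ≠ b := Fin.val_ne_of_ne hjb
  simp only [Finset.mem_filter, Finset.mem_univ, true_and, Fin.lt_def]
  omega

lemma sufSum_swapPair (hab : (a : ℕ) + 1 = b) {j : Fin n} (hja : j ≠ a) (i : Fin n → Bool) :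
    sufSum (swapPair a b i) j = sufSum i j := by
  refine sum_sgn_swapPair i ?_
  have : (j : ℕ) ≠ a := Fin.val_ne_of_ne hja
  simp only [Finset.mem_filter, Finset.mem_univ, true_and, Fin.lt_def]
  omega

variable (v : k)

lemma commute_eop_weightedSubst {g : (Fin n → Bool) → k} {σ : (Fin n → Bool) → Fin n → Bool}
    (hσa : ∀ i, σ i a = i a) (hσb : ∀ i, σ i b = i b)
    (hσ : ∀ i, σ (swapPair a b i) = swapPair a b (σ i)) (hg : ∀ i, g (swapPair a b i) = g i) :
    Commute (eop v a b) (weightedSubst g σ) := by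
  refine LinearMap.ext fun f => funext fun i => ?_
  simp only [Module.End.mul_apply, weightedSubst_apply, eop, LinearMap.coe_mk, AddHom.coe_mk,
    hσa, hσb, hσ, hg]
  split_ifs <;> ring

lemma commute_eop_Kop : Commute (eop v a b) (Kop v n) := by
  rw [Kop_eq_weightedSubst]
  exact commute_eop_weightedSubst v (fun _ => rfl) (fun _ => rfl) (fun _ => rfl)
    fun i => by rw [wt_swapPair]

lemma commute_eop_Esite (hab : (a : ℕ) + 1 = b) {j : Fin n} (hja : j ≠ a) (hjb : j ≠ b) :
    Commute (eop v a b) (Esite v j) :=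
  commute_eop_weightedSubst v (fun _ => Function.update_of_ne hja.symm _ _)
    (fun _ => Function.update_of_ne hjb.symm _ _)
    (fun i => (swapPair_update_of_ne hja hjb i _).symm)
    fun i => by rw [swapPair_apply_of_ne hja hjb, prefSum_swapPair hab hjb]

lemma commute_eop_Fsite (hab : (a : ℕ) + 1 = b) {j : Fin n} (hja : j ≠ a) (hjb : j ≠ b) :
    Commute (eop v a b) (Fsite v j) :=
  commute_eop_weightedSubst v (fun _ => Function.update_of_ne hja.symm _ _)
    (fun _ => Function.update_of_ne hjb.symm _ _)
    (fun i => (swapPair_update_of_ne hja hjb i _).symm)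
    fun i => by rw [swapPair_apply_of_ne hja hjb, sufSum_swapPair hab hja]

end SwapPair

section SetPair

def setPair (a b : Fin n) (i : Fin n → Bool) (x y : Bool) : Fin n → Bool :=
  Function.update (Function.update i a x) b y

variable {a b : Fin n}

@[simp]
lemma setPair_self (i : Fin n → Bool) : setPair a b i (i a) (i b) = i := by
  simp [setPair]

lemma setPair_apply_of_ne {t : Fin n} (hta : t ≠ a) (htb : t ≠ b) (i : Fin n → Bool) (x y : Bool) :
    setPair a b i x y t = i t := by
  simp [setPair, hta, htb]

@[simp]
lemma setPair_apply_left (hne : a ≠ b) (i : Fin n → Bool) (x y : Bool) :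
    setPair a b i x y a = x := by
  simp [setPair, hne]

@[simp]
lemma setPair_apply_right (i : Fin n → Bool) (x y : Bool) : setPair a b i x y b = y := by
  simp [setPair]

@[simp]
lemma update_setPair_left (hne : a ≠ b) (i : Fin n → Bool) (x y z : Bool) :
    Function.update (setPair a b i x y) a z = setPair a b i z y := by
  simp [setPair, Function.update_comm hne]

@[simp]
lemma update_setPair_right (i : Fin n → Bool) (x y z : Bool) :
    Function.update (setPair a b i x y) b z = setPair a b i x z := by
  simp [setPair]

@[simp]
lemma swapPair_setPair (hne : a ≠ b) (i : Fin n → Bool) (x y : Bool) :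
    swapPair a b (setPair a b i x y) = setPair a b i y x := by
  funext t
  simp only [swapPair, setPair, Function.update_apply]
  split_ifs <;> simp_all

lemma sum_sgn_setPair {s : Finset (Fin n)} (ha : a ∉ s) (hb : b ∉ s) (i : Fin n → Bool)
    (x y : Bool) : ∑ t ∈ s, sgn (setPair a b i x y t) = ∑ t ∈ s, sgn (i t) :=
  Finset.sum_congr rfl fun t ht =>
    by rw [setPair_apply_of_ne (ne_of_mem_of_not_mem ht ha) (ne_of_mem_of_not_mem ht hb)]

lemma filter_lt_eq_insert (hab : (a : ℕ) + 1 = b) :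
    Finset.univ.filter (· < b) = insert a (Finset.univ.filter (· < a)) := by
  ext t
  simp only [Finset.mem_insert, Finset.mem_filter, Finset.mem_univ, true_and, Fin.lt_def,
    Fin.ext_iff]
  omega

lemma filter_gt_eq_insert (hab : (a : ℕ) + 1 = b) :
    Finset.univ.filter (a < ·) = insert b (Finset.univ.filter (b < ·)) := by
  ext t
  simp only [Finset.mem_insert, Finset.mem_filter, Finset.mem_univ, true_and, Fin.lt_def,
    Fin.ext_iff]
  omega

lemma prefSum_setPair_left (hab : (a : ℕ) + 1 = b) (i : Fin n → Bool) (x y : Bool) :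
    prefSum (setPair a b i x y) a = prefSum i a := by
  refine sum_sgn_setPair (by simp) ?_ i x y
  simp only [Finset.mem_filter, Finset.mem_univ, true_and, Fin.lt_def]
  omega

lemma prefSum_setPair_right (hab : (a : ℕ) + 1 = b) (i : Fin n → Bool) (x y : Bool) :
    prefSum (setPair a b i x y) b = sgn x + prefSum i a := by
  rw [prefSum, filter_lt_eq_insert hab, Finset.sum_insert (by simp),
    setPair_apply_left (Fin.ne_of_val_ne (by omega))]
  exact congrArg (sgn x + ·) (prefSum_setPair_left hab i x y)

lemma sufSum_setPair_right (hab : (a : ℕ) + 1 = b) (i : Fin n → Bool) (x y : Bool) :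
    sufSum (setPair a b i x y) b = sufSum i b := by
  refine sum_sgn_setPair ?_ (by simp) i x y
  simp only [Finset.mem_filter, Finset.mem_univ, true_and, Fin.lt_def]
  omega

lemma sufSum_setPair_left (hab : (a : ℕ) + 1 = b) (i : Fin n → Bool) (x y : Bool) :
    sufSum (setPair a b i x y) a = sgn y + sufSum i b := by
  rw [sufSum, filter_gt_eq_insert hab, Finset.sum_insert (by simp), setPair_apply_right]
  exact congrArg (sgn y + ·) (sufSum_setPair_right hab i x y)

end SetPair

lemma ext_of_setPair (a b : Fin n) {A B : Module.End k (Tn k n)}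
    (h : ∀ f i x y, A f (setPair a b i x y) = B f (setPair a b i x y)) : A = B :=
  LinearMap.ext fun f => funext fun i => by simpa using h f i (i a) (i b)

section PairOps

variable {a b : Fin n} {v : k}

lemma eop_mul_Esite_pair_eq_zero (hv : v ≠ 0) (hab : (a : ℕ) + 1 = b) :
    eop v a b * (Esite v a + Esite v b) = 0 ∧ (Esite v a + Esite v b) * eop v a b = 0 := by
  have hne : a ≠ b := Fin.ne_of_val_ne (by omega)
  constructor <;> refine ext_of_setPair a b fun f i x y => ?_ <;>
    cases x <;> cases y <;>
    simp [eop, Esite, hne, prefSum_setPair_left hab, prefSum_setPair_right hab, sgn,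
      zpow_add₀ hv] <;> field_simp <;> ring

lemma eop_mul_Fsite_pair_eq_zero (hv : v ≠ 0) (hab : (a : ℕ) + 1 = b) :
    eop v a b * (Fsite v a + Fsite v b) = 0 ∧ (Fsite v a + Fsite v b) * eop v a b = 0 := by
  have hne : a ≠ b := Fin.ne_of_val_ne (by omega)
  constructor <;> refine ext_of_setPair a b fun f i x y => ?_ <;>
    cases x <;> cases y <;>
    simp [eop, Fsite, hne, sufSum_setPair_left hab, sufSum_setPair_right hab, sgn,
      zpow_add₀ hv] <;> field_simp <;> ring

lemma commute_eop_Eop (hv : v ≠ 0) (hab : (a : ℕ) + 1 = b) : Commute (eop v a b) (Eop v n) := by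
  obtain ⟨hleft, hright⟩ := eop_mul_Esite_pair_eq_zero hv hab
  rw [Eop_eq_sum_Esite]
  exact commute_sum_of_pair (Fin.ne_of_val_ne (by omega))
    (fun j hja hjb => commute_eop_Esite v hab hja hjb) hleft hright

lemma commute_eop_Fop (hv : v ≠ 0) (hab : (a : ℕ) + 1 = b) : Commute (eop v a b) (Fop v n) := by
  obtain ⟨hleft, hright⟩ := eop_mul_Fsite_pair_eq_zero hv hab
  rw [Fop_eq_sum_Fsite]
  exact commute_sum_of_pair (Fin.ne_of_val_ne (by omega))
    (fun j hja hjb => commute_eop_Fsite v hab hja hjb) hleft hright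

end PairOps

/-- each `ė_i` commutes with `E`, `F` and `K` on `V^{⊗n}`. -/
theorem stmt_9 {k : Type*} [Field k] (v : k) (hv : v ≠ 0) (n : ℕ)
    (i : ℕ) (hi : i + 1 < n) :
    eop v (⟨i, by omega⟩ : Fin n) ⟨i + 1, hi⟩ ∘ₗ Eop v n =
      Eop v n ∘ₗ eop v (⟨i, by omega⟩ : Fin n) ⟨i + 1, hi⟩ ∧
    eop v (⟨i, by omega⟩ : Fin n) ⟨i + 1, hi⟩ ∘ₗ Fop v n =
      Fop v n ∘ₗ eop v (⟨i, by omega⟩ : Fin n) ⟨i + 1, hi⟩ ∧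
    eop v (⟨i, by omega⟩ : Fin n) ⟨i + 1, hi⟩ ∘ₗ Kop v n =
      Kop v n ∘ₗ eop v (⟨i, by omega⟩ : Fin n) ⟨i + 1, hi⟩ := by
  have hab : ((⟨i, by omega⟩ : Fin n) : ℕ) + 1 = (⟨i + 1, hi⟩ : Fin n) := rfl
  exact ⟨commute_eop_Eop hv hab, commute_eop_Fop hv hab, commute_eop_Kop v⟩
end
end
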